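/- A cofibration f : A → B between cofibrant objects in a model category C is a weak equivalence if and only if it has the left lifting property with respect to all fibrations between fibrant objects in C. -/

import Mathlib

open CategoryTheory CategoryTheory.Limits

universe w

/-- A class of morphisms closed under retracts. -/
def RetractClosed {C : Type w} [Category C] (P : MorphismProperty C) : Prop :=
  ∀ ⦃A B A' B' : C⦄ (f : A ⟶ B) (f' : A' ⟶ B') (i : A ⟶ A') (r : A' ⟶ A)
    (j : B ⟶ B') (s : B' ⟶ B),
    i ≫ r = 𝟙 A → j ≫ s = 𝟙 B → i ≫ f' = f ≫ j → f' ≫ s = r ≫ f → P f' → P f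

/-- A Quillen model structure on a category: weak equivalences, cofibrations and fibrations,
satisfying two-out-of-three, closure under retracts, lifting and factorization axioms. -/
structure ModelCat (C : Type w) [Category C] where
  W : MorphismProperty C
  Cof : MorphismProperty C
  Fib : MorphismProperty C
  two_out_of_three : W.HasTwoOutOfThreeProperty
  retract_W : RetractClosed W
  retract_Cof : RetractClosed Cof
  retract_Fib : RetractClosed Fib
  lift_left : ∀ ⦃A B X Y : C⦄ (i : A ⟶ B) (p : X ⟶ Y),
    Cof i → W i → Fib p → HasLiftingProperty i p
  lift_right : ∀ ⦃A B X Y : C⦄ (i : A ⟶ B) (p : X ⟶ Y),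
    Cof i → Fib p → W p → HasLiftingProperty i p
  fact_left : ∀ ⦃X Y : C⦄ (f : X ⟶ Y), ∃ (Z : C) (i : X ⟶ Z) (p : Z ⟶ Y),
    Cof i ∧ W i ∧ Fib p ∧ i ≫ p = f
  fact_right : ∀ ⦃X Y : C⦄ (f : X ⟶ Y), ∃ (Z : C) (i : X ⟶ Z) (p : Z ⟶ Y),
    Cof i ∧ Fib p ∧ W p ∧ i ≫ p = f

/-- An object is cofibrant if the map from the initial object is a cofibration. -/
def ModelCat.Cofibrant {C : Type w} [Category C] [Limits.HasInitial C]
    (M : ModelCat C) (X : C) : Prop :=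
  M.Cof (Limits.initial.to X)

/-- An object is fibrant if the map to the terminal object is a fibration. -/
def ModelCat.Fibrant {C : Type w} [Category C] [Limits.HasTerminal C]
    (M : ModelCat C) (X : C) : Prop :=
  M.Fib (Limits.terminal.from X)

/-!
Acyclic cofibrations lift against all fibrations. Conversely, choose a fibrant replacement
`i : B ⟶ RB` (an acyclic cofibration) and factor `f ≫ i = j ≫ q` with `j` an acyclic cofibration
and `q` a fibration. Then `q` is a fibration between fibrant objects, so both `f` and `i` lift
against it, hence so does `f ≫ i`; the retract argument exhibits `f ≫ i` as a retract of `j`,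
and two-out-of-three gives that `f` is a weak equivalence.
-/

lemma RetractClosed.isStableUnderRetracts {C : Type w} [Category C] {P : MorphismProperty C}
    (hP : RetractClosed P) : P.IsStableUnderRetracts where
  of_retract h hg :=
    hP _ _ h.i.left h.r.left h.i.right h.r.right h.retract_left h.retract_right h.i_w h.r_w.symm hg

namespace ModelCat

variable {C : Type w} [Category C] (M : ModelCat C)

instance : M.W.IsStableUnderRetracts := M.retract_W.isStableUnderRetracts

instance : M.Fib.IsStableUnderRetracts := M.retract_Fib.isStableUnderRetracts

lemma fib_comp {X Y Z : C} {q : X ⟶ Y} {r : Y ⟶ Z} (hq : M.Fib q) (hr : M.Fib r) :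
    M.Fib (q ≫ r) := by
  obtain ⟨_, i, p, hi, hiW, hp, hfac⟩ := M.fact_left (q ≫ r)
  have := M.lift_left i q hi hiW hq
  have := M.lift_left i r hi hiW hr
  exact MorphismProperty.of_retract (RetractArrow.ofRightLiftingProperty hfac) hp

lemma fibrant_of_fib [HasTerminal C] {X Y : C} {p : X ⟶ Y} (hp : M.Fib p) (hY : M.Fibrant Y) :
    M.Fibrant X := by
  rw [Fibrant, ← terminal.comp_from p]
  exact M.fib_comp hp hY

lemma exists_fibrantReplacement [HasTerminal C] (X : C) :
    ∃ (RX : C) (i : X ⟶ RX), M.Cof i ∧ M.W i ∧ M.Fibrant RX := by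
  obtain ⟨RX, i, p, hi, hiW, hp, -⟩ := M.fact_left (terminal.from X)
  exact ⟨RX, i, hi, hiW, by rwa [Fibrant, terminal.hom_ext (terminal.from RX) p]⟩

end ModelCat

theorem cofibration_between_cofibrants_weq_iff_llp_general {C : Type w} [Category C]
    [HasTerminal C] (M : ModelCat C) {A B : C} (f : A ⟶ B)
    (hf : M.Cof f) :
    M.W f ↔
      ∀ ⦃X Y : C⦄ (p : X ⟶ Y), M.Fib p → M.Fibrant X → M.Fibrant Y →
        HasLiftingProperty f p := by
  refine ⟨fun hW _ _ p hp _ _ ↦ M.lift_left f p hf hW hp, fun hllp ↦ ?_⟩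
  obtain ⟨RB, i, hi, hiW, hRB⟩ := M.exists_fibrantReplacement B
  obtain ⟨_, j, q, -, hjW, hq, hfac⟩ := M.fact_left (f ≫ i)
  have := hllp q hq (M.fibrant_of_fib hq hRB) hRB
  have := M.lift_left i q hi hiW hq
  have hfiW : M.W (f ≫ i) :=
    MorphismProperty.of_retract (RetractArrow.ofLeftLiftingProperty hfac) hjW
  exact M.two_out_of_three.of_postcomp f i hiW hfiW

/-- A cofibration between cofibrant objects in a model category is a weak equivalence if and
only if it has the left lifting property with respect to all fibrations between fibrant
objects. -/
theorem cofibration_between_cofibrants_weq_iff_llp {C : Type w} [Category C]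
    [HasInitial C] [HasTerminal C] (M : ModelCat C) {A B : C} (f : A ⟶ B)
    (hf : M.Cof f) (hA : M.Cofibrant A) (hB : M.Cofibrant B) :
    M.W f ↔
      ∀ ⦃X Y : C⦄ (p : X ⟶ Y), M.Fib p → M.Fibrant X → M.Fibrant Y →
        HasLiftingProperty f p :=
  cofibration_between_cofibrants_weq_iff_llp_general M f hf
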